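/- Let e ∈ E¹ with v = s(e), and suppose every path p of positive length with s(p) = v and r(p) = r(e) has the form p = et for some path t. Then the least congruence on G(E) containing the pair (v, ee⁻¹) is not a Rees congruence. -/

import Mathlib

universe u

/-- A directed graph: vertices, edges, source and range maps. -/
structure DGraph : Type (u + 1) where
  V : Type u
  Ed : Type u
  src : Ed → V
  rng : Ed → V

/-- The end vertex of a list of edges started at `v` (ignoring composability). -/
def DGraph.ranAux (G : DGraph) : G.V → List G.Ed → G.V
  | v, [] => v
  | _, e :: es => DGraph.ranAux G (G.rng e) es

/-- The edges `l` form a composable path starting at `v`. -/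
def DGraph.Chain (G : DGraph) : G.V → List G.Ed → Prop
  | _, [] => True
  | v, e :: es => G.src e = v ∧ DGraph.Chain G (G.rng e) es

theorem DGraph.ranAux_append (G : DGraph) (v : G.V) (l1 l2 : List G.Ed) :
    G.ranAux v (l1 ++ l2) = G.ranAux (G.ranAux v l1) l2 := by
  induction l1 generalizing v with
  | nil => rfl
  | cons e es ih => exact ih (G.rng e)

theorem DGraph.chain_append (G : DGraph) {v : G.V} {l1 l2 : List G.Ed}
    (h1 : G.Chain v l1) (h2 : G.Chain (G.ranAux v l1) l2) : G.Chain v (l1 ++ l2) := by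
  induction l1 generalizing v with
  | nil => exact h2
  | cons e es ih => exact ⟨h1.1, ih h1.2 h2⟩

theorem DGraph.chain_append_right (G : DGraph) {v : G.V} {l1 l2 : List G.Ed}
    (h : G.Chain v (l1 ++ l2)) : G.Chain (G.ranAux v l1) l2 := by
  induction l1 generalizing v with
  | nil => exact h
  | cons e es ih => exact ih h.2

/-- A (finite, directed) path in the graph `G`: a start vertex together
with a composable list of edges. Vertices are the paths of length `0`. -/
structure GPath (G : DGraph.{u}) : Type u where
  start : G.V
  edges : List G.Ed
  chain : G.Chain start edges

namespace GPath

variable {G : DGraph}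

/-- The range (end vertex) of a path. -/
def ran (p : GPath G) : G.V := G.ranAux p.start p.edges

/-- The path of length zero at a vertex. -/
def ofVertex (G : DGraph) (v : G.V) : GPath G := ⟨v, [], trivial⟩

/-- The path of length one given by an edge. -/
def ofEdge (G : DGraph) (e : G.Ed) : GPath G := ⟨G.src e, [e], ⟨rfl, trivial⟩⟩

@[simp] theorem ofVertex_ran (G : DGraph) (v : G.V) : (ofVertex G v).ran = v := rfl

@[simp] theorem ofEdge_ran (G : DGraph) (e : G.Ed) : (ofEdge G e).ran = G.rng e := rfl

/-- Concatenation of composable paths. -/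
def append (p q : GPath G) (h : p.ran = q.start) : GPath G :=
  ⟨p.start, p.edges ++ q.edges,
    G.chain_append p.chain (by
      show G.Chain (G.ranAux p.start p.edges) q.edges
      have : G.ranAux p.start p.edges = q.start := h
      rw [this]; exact q.chain)⟩

@[simp] theorem append_ran (p q : GPath G) (h : p.ran = q.start) :
    (p.append q h).ran = q.ran := by
  show G.ranAux p.start (p.edges ++ q.edges) = q.ran
  rw [G.ranAux_append]
  have : G.ranAux p.start p.edges = q.start := h
  rw [this]; rfl

/-- `y` is an initial segment of the path `p`. -/
def IsPrefixOf (y p : GPath G) : Prop := y.start = p.start ∧ y.edges <+: p.edges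

/-- The remainder `t` of `p` after its initial segment `y`, so that `p = y ++ t`. -/
def remainder (y p : GPath G) (h : y.IsPrefixOf p) : GPath G :=
  ⟨y.ran, p.edges.drop y.edges.length, by
    obtain ⟨l2, hl⟩ := h.2
    rw [← hl, List.drop_left]
    show G.Chain (G.ranAux y.start y.edges) l2
    rw [h.1]
    exact G.chain_append_right (v := p.start) (l1 := y.edges) (l2 := l2)
      (by rw [hl]; exact p.chain)⟩

@[simp] theorem remainder_ran (y p : GPath G) (h : y.IsPrefixOf p) :
    (y.remainder p h).ran = p.ran := by
  obtain ⟨l2, hl⟩ := h.2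
  show G.ranAux y.ran (p.edges.drop y.edges.length) = p.ran
  rw [← hl, List.drop_left]
  show G.ranAux (G.ranAux y.start y.edges) l2 = p.ran
  rw [h.1, ← G.ranAux_append, hl]
  rfl

end GPath

/-- The graph inverse semigroup of `G` (in normal form): its elements are zero together
with the elements `x * y⁻¹` for paths `x`, `y` with the same range. -/
inductive GIS (G : DGraph.{u}) : Type u where
  | zero : GIS G
  | mk (x y : GPath G) (h : x.ran = y.ran) : GIS G

instance (G : DGraph) : Zero (GIS G) := ⟨GIS.zero⟩

open scoped Classical in
/-- Multiplication in the graph inverse semigroup. -/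
noncomputable def GIS.gmul {G : DGraph} : GIS G → GIS G → GIS G
  | GIS.zero, _ => GIS.zero
  | GIS.mk _ _ _, GIS.zero => GIS.zero
  | GIS.mk x y hxy, GIS.mk p q hpq =>
    if h1 : y.IsPrefixOf p then
      GIS.mk (x.append (y.remainder p h1) hxy) q
        (by exact (GPath.append_ran _ _ _).trans ((GPath.remainder_ran _ _ _).trans hpq))
    else if h2 : p.IsPrefixOf y then
      GIS.mk x (q.append (p.remainder y h2) hpq.symm)
        (by exact hxy.trans ((GPath.append_ran _ _ _).trans (GPath.remainder_ran _ _ _)).symm)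
    else GIS.zero

noncomputable instance (G : DGraph) : Mul (GIS G) := ⟨GIS.gmul⟩

/-- The element of `GIS G` corresponding to a vertex `v` (i.e. `v = v * v⁻¹`). -/
def vertexEl (G : DGraph) (v : G.V) : GIS G :=
  GIS.mk (GPath.ofVertex G v) (GPath.ofVertex G v) rfl

/-- The element of `GIS G` corresponding to an edge `e` (i.e. `e = e * r(e)⁻¹`). -/
def edgeEl (G : DGraph) (e : G.Ed) : GIS G :=
  GIS.mk (GPath.ofEdge G e) (GPath.ofVertex G (G.rng e)) rfl

/-- The inverse operation on `GIS G`: `(x y⁻¹)⁻¹ = y x⁻¹`. -/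
def GIS.inv {G : DGraph} : GIS G → GIS G
  | GIS.zero => GIS.zero
  | GIS.mk x y h => GIS.mk y x h.symm

/-- `a` lies in the principal left ideal generated by `b` (`S¹a ⊆ S¹b`). -/
def GreenLeL {G : DGraph} (a b : GIS G) : Prop := a = b ∨ ∃ c, a = c * b

/-- `a` lies in the principal right ideal generated by `b` (`aS¹ ⊆ bS¹`). -/
def GreenLeR {G : DGraph} (a b : GIS G) : Prop := a = b ∨ ∃ c, a = b * c

/-- `a` lies in the principal two-sided ideal generated by `b` (`S¹aS¹ ⊆ S¹bS¹`). -/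
def GreenLeJ {G : DGraph} (a b : GIS G) : Prop :=
  a = b ∨ (∃ c, a = c * b) ∨ (∃ c, a = b * c) ∨ (∃ c d, a = c * b * d)

/-- Green's `L`-relation. -/
def GreenEqL {G : DGraph} (a b : GIS G) : Prop := GreenLeL a b ∧ GreenLeL b a

/-- Green's `R`-relation. -/
def GreenEqR {G : DGraph} (a b : GIS G) : Prop := GreenLeR a b ∧ GreenLeR b a

/-- Green's `J`-relation. -/
def GreenEqJ {G : DGraph} (a b : GIS G) : Prop := GreenLeJ a b ∧ GreenLeJ b a

/-- There is a (possibly trivial) directed path from `v` to `w` in `G`. -/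
def GConnected (G : DGraph) (v w : G.V) : Prop := ∃ t : GPath G, t.start = v ∧ t.ran = w

/-- `I` is a (two-sided) ideal of `GIS G`. -/
def GISIdeal {G : DGraph} (I : Set (GIS G)) : Prop :=
  ∀ a ∈ I, ∀ c : GIS G, a * c ∈ I ∧ c * a ∈ I

/-- `R` is the Rees congruence of some ideal `I`, i.e. `R = (I × I) ∪ Δ`. -/
def IsReesCon {G : DGraph} (R : Con (GIS G)) : Prop :=
  ∃ I : Set (GIS G), GISIdeal I ∧ ∀ a b : GIS G, R a b ↔ (a ∈ I ∧ b ∈ I) ∨ a = b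

/-- The only congruences on `GIS G` are the universal one and the diagonal. -/
def CongFree (G : DGraph) : Prop :=
  ∀ R : Con (GIS G), (∀ a b : GIS G, R a b) ∨ (∀ a b : GIS G, R a b ↔ a = b)

/-- The natural partial order on the inverse semigroup `GIS G`:
`a ≤ b` iff `a = ε * b` for some idempotent `ε`. -/
def natLe {G : DGraph} (a b : GIS G) : Prop := ∃ ε : GIS G, ε * ε = ε ∧ a = ε * b

/-- The graph obtained from `G` by deleting the vertices in `S` and all
edges incident to them. -/
def DGraph.delete (G : DGraph) (S : Set G.V) : DGraph where
  V := {v : G.V // v ∉ S}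
  Ed := {e : G.Ed // G.src e ∉ S ∧ G.rng e ∉ S}
  src e := ⟨G.src e.1, e.2.1⟩
  rng e := ⟨G.rng e.1, e.2.2⟩

/-- The graph with a single vertex and `n` loops; its graph inverse semigroup
is the polycyclic monoid `Pₙ`. -/
def polyGraph (n : ℕ) : DGraph :=
  ⟨PUnit, Fin n, fun _ => PUnit.unit, fun _ => PUnit.unit⟩

/-!
If the congruence `ρ` generated by `v ~ e e⁻¹` were the Rees congruence of an ideal `I`, then
`v ∈ I` (as `v ≠ e e⁻¹`), hence `0 = v · 0 ∈ I` and `v ρ 0`. So it suffices to find a congruence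
containing `(v, e e⁻¹)` but not `(v, 0)`. Let `S` be the set of vertices from which `r(e)` cannot
be reached and `I_S` the ideal of `0` and the `x y⁻¹` with `r(x) ∈ S`. Relate two elements if both
lie in `I_S`, or if they agree after cancelling a common trailing power of `e`,
`(x eⁿ)(y eⁿ)⁻¹ ↦ x y⁻¹`. This is a congruence because, by the hypothesis on `e`, a product that
splits such a trailing `e` off `s(e) = v` continues along a path out of `v` not beginning with
`e`, and so lands in `I_S`. Neither clause relates `v` to `0`.
-/

namespace List

variable {α : Type*} [DecidableEq α]

def stripCommonPrefix (a : α) : List α → List α → List α × List α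
  | [], m => ([], m)
  | b :: l, [] => (b :: l, [])
  | b :: l, c :: m => if b = a ∧ c = a then stripCommonPrefix a l m else (b :: l, c :: m)

theorem stripCommonPrefix_spec (a : α) : ∀ l m : List α, ∃ n,
    l = replicate n a ++ (stripCommonPrefix a l m).1 ∧
      m = replicate n a ++ (stripCommonPrefix a l m).2
  | [], _ => ⟨0, rfl, rfl⟩
  | _ :: _, [] => ⟨0, rfl, rfl⟩
  | b :: l, c :: m => by
    by_cases h : b = a ∧ c = a
    · obtain ⟨n, hl, hm⟩ := stripCommonPrefix_spec a l m
      obtain ⟨rfl, rfl⟩ := h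
      exact ⟨n + 1, by simp [stripCommonPrefix, replicate_succ, ← hl],
        by simp [stripCommonPrefix, replicate_succ, ← hm]⟩
    · exact ⟨0, by simp [stripCommonPrefix, h]⟩

theorem stripCommonPrefix_comm (a : α) : ∀ l m : List α,
    stripCommonPrefix a m l = (stripCommonPrefix a l m).swap
  | [], [] => rfl
  | [], _ :: _ => rfl
  | _ :: _, [] => rfl
  | b :: l, c :: m => by
    simp only [stripCommonPrefix, and_comm (a := c = a)]
    split_ifs
    · exact stripCommonPrefix_comm a l m
    · rfl

def stripCommonSuffix (a : α) (l m : List α) : List α × List α :=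
  Prod.map reverse reverse (stripCommonPrefix a l.reverse m.reverse)

theorem stripCommonSuffix_spec (a : α) (l m : List α) : ∃ n,
    l = (stripCommonSuffix a l m).1 ++ replicate n a ∧
      m = (stripCommonSuffix a l m).2 ++ replicate n a := by
  obtain ⟨n, hl, hm⟩ := stripCommonPrefix_spec a l.reverse m.reverse
  refine ⟨n, ?_, ?_⟩
  · simpa [stripCommonSuffix] using congrArg reverse hl
  · simpa [stripCommonSuffix] using congrArg reverse hm

theorem stripCommonSuffix_comm (a : α) (l m : List α) :
    stripCommonSuffix a m l = (stripCommonSuffix a l m).swap := by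
  simp only [stripCommonSuffix, stripCommonPrefix_comm a l.reverse]
  rfl

theorem stripCommonSuffix_concat (a : α) (l m : List α) :
    stripCommonSuffix a (l ++ [a]) (m ++ [a]) = stripCommonSuffix a l m := by
  simp [stripCommonSuffix, stripCommonPrefix]

theorem stripCommonSuffix_fst_prefix (a : α) (l m : List α) : (stripCommonSuffix a l m).1 <+: l :=
  let ⟨n, hl, _⟩ := stripCommonSuffix_spec a l m
  ⟨replicate n a, hl.symm⟩

theorem stripCommonSuffix_snd_prefix (a : α) (l m : List α) : (stripCommonSuffix a l m).2 <+: m :=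
  let ⟨n, _, hm⟩ := stripCommonSuffix_spec a l m
  ⟨replicate n a, hm.symm⟩

end List

theorem DGraph.chain_append_left (G : DGraph) {v : G.V} {l₁ l₂ : List G.Ed}
    (h : G.Chain v (l₁ ++ l₂)) : G.Chain v l₁ := by
  induction l₁ generalizing v with
  | nil => trivial
  | cons f l ih => exact ⟨h.1, ih h.2⟩

theorem DGraph.ranAux_eq_src_of_chain (G : DGraph) {v : G.V} {l r : List G.Ed} {f : G.Ed}
    (h : G.Chain v (l ++ f :: r)) : G.ranAux v l = G.src f :=
  (G.chain_append_right h).1.symm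

def DGraph.IsForwardClosed (G : DGraph) (S : Set G.V) : Prop :=
  ∀ p : GPath G, p.start ∈ S → p.ran ∈ S

structure DGraph.IsEdgeBarrier (G : DGraph) (e : G.Ed) (S : Set G.V) : Prop where
  forwardClosed : G.IsForwardClosed S
  rng_not_mem : G.rng e ∉ S
  ran_mem : ∀ t : GPath G, t.start = G.src e → t.edges ≠ [] →
    ¬ (GPath.ofEdge G e).IsPrefixOf t → t.ran ∈ S

theorem DGraph.IsEdgeBarrier.src_not_mem {G : DGraph} {e : G.Ed} {S : Set G.V}
    (hS : G.IsEdgeBarrier e S) : G.src e ∉ S :=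
  fun h => hS.rng_not_mem (hS.forwardClosed (GPath.ofEdge G e) h)

namespace GPath

variable {G : DGraph}

@[ext] theorem ext {p q : GPath G} (hs : p.start = q.start) (he : p.edges = q.edges) : p = q := by
  cases p; cases q; subst hs he; rfl

@[simp] theorem ofVertex_edges (v : G.V) : (ofVertex G v).edges = [] := rfl
@[simp] theorem ofEdge_edges (e : G.Ed) : (ofEdge G e).edges = [e] := rfl

@[simp] theorem append_start (p q : GPath G) (h : p.ran = q.start) :
    (p.append q h).start = p.start := rfl

@[simp] theorem append_edges (p q : GPath G) (h : p.ran = q.start) :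
    (p.append q h).edges = p.edges ++ q.edges := rfl

theorem append_assoc (p q r : GPath G) (hpq : p.ran = q.start) (hqr : q.ran = r.start) :
    (p.append q hpq).append r (by simpa using hqr) =
      p.append (q.append r hqr) (by simpa using hpq) :=
  ext rfl (List.append_assoc _ _ _)

theorem ran_eq_rng_of_edges_eq_concat {p : GPath G} {l : List G.Ed} {f : G.Ed}
    (h : p.edges = l ++ [f]) : p.ran = G.rng f := by
  rw [ran, h, DGraph.ranAux_append]
  rfl

def truncate (p : GPath G) (l : List G.Ed) (h : l <+: p.edges) : GPath G :=
  ⟨p.start, l, by obtain ⟨r, hr⟩ := h; exact G.chain_append_left (hr ▸ p.chain)⟩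

@[simp] theorem truncate_edges (p : GPath G) (l : List G.Ed) (h : l <+: p.edges) :
    (p.truncate l h).edges = l := rfl

theorem eq_append_ofEdge {x x' : GPath G} {e : G.Ed} (hs : x'.start = x.start)
    (he : x'.edges = x.edges ++ [e]) : ∃ h, x' = x.append (ofEdge G e) h := by
  have hc : G.Chain x.start (x.edges ++ e :: []) := by rw [← he, ← hs]; exact x'.chain
  exact ⟨G.ranAux_eq_src_of_chain hc, ext hs he⟩

theorem IsPrefixOf.trans {p q r : GPath G} (hpq : p.IsPrefixOf q) (hqr : q.IsPrefixOf r) :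
    p.IsPrefixOf r :=
  ⟨hpq.1.trans hqr.1, hpq.2.trans hqr.2⟩

theorem isPrefixOf_append (p q : GPath G) (h : p.ran = q.start) : p.IsPrefixOf (p.append q h) :=
  ⟨rfl, List.prefix_append _ _⟩

theorem IsPrefixOf.exists_eq_append {y p : GPath G} (h : y.IsPrefixOf p) :
    ∃ t ht, p = y.append t ht :=
  ⟨y.remainder p h, rfl, ext h.1.symm (List.prefix_iff_eq_append.1 h.2).symm⟩

theorem IsPrefixOf.isPrefixOf_of_append_ofEdge {p y : GPath G} {e : G.Ed} {hy : y.ran = G.src e}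
    (h : p.IsPrefixOf (y.append (ofEdge G e) hy))
    (hn : ¬ (y.append (ofEdge G e) hy).IsPrefixOf p) : p.IsPrefixOf y := by
  rcases List.prefix_concat_iff.1 h.2 with he | he
  · exact absurd ⟨h.1.symm, he ▸ List.prefix_refl _⟩ hn
  · exact ⟨h.1, he⟩

theorem ran_eq_src_of_edges_eq {p q : GPath G} {r : List G.Ed} {f : G.Ed}
    (hs : q.start = p.start) (h : p.edges = q.edges ++ f :: r) : q.ran = G.src f := by
  rw [ran, hs]
  exact G.ranAux_eq_src_of_chain (h ▸ p.chain)

theorem ran_eq_ran_of_edges_eq_append_replicate {x y x₀ y₀ : GPath G} {e : G.Ed} {n : ℕ}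
    (hxs : x₀.start = x.start) (hys : y₀.start = y.start)
    (hx : x.edges = x₀.edges ++ List.replicate n e)
    (hy : y.edges = y₀.edges ++ List.replicate n e) (h : x.ran = y.ran) : x₀.ran = y₀.ran := by
  cases n with
  | zero =>
    simp only [List.replicate_zero, List.append_nil] at hx hy
    rwa [ext hxs hx.symm, ext hys hy.symm]
  | succ n =>
    rw [List.replicate_succ] at hx hy
    rw [ran_eq_src_of_edges_eq hxs hx, ran_eq_src_of_edges_eq hys hy]

end GPath

namespace GIS

open GPath

variable {G : DGraph}

theorem mk_congr {x y x' y' : GPath G} {h : x.ran = y.ran} {h' : x'.ran = y'.ran}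
    (hx : x = x') (hy : y = y') : mk x y h = mk x' y' h' := by
  subst hx hy; rfl

theorem mk_ne_zero {x y : GPath G} {h : x.ran = y.ran} : mk x y h ≠ 0 := by
  intro h₀; cases h₀

protected theorem mul_zero (a : GIS G) : a * 0 = 0 := by cases a <;> rfl

/-- `x y⁻¹ · (y t) q⁻¹ = (x t) q⁻¹`. -/
theorem mk_mul_mk_of_eq_append {x y p q t : GPath G} {hxy : x.ran = y.ran} {hpq : p.ran = q.ran}
    {ht : y.ran = t.start} (hp : p = y.append t ht) :
    mk x y hxy * mk p q hpq = mk (x.append t (hxy.trans ht)) q (by subst hp; simpa using hpq) := by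
  subst hp
  change gmul _ _ = _
  rw [gmul, dif_pos (isPrefixOf_append y t ht)]
  exact mk_congr (ext rfl (by show x.edges ++ (y.edges ++ t.edges).drop y.edges.length = _; simp))
    rfl

/-- `x (p t)⁻¹ · p q⁻¹ = x (q t)⁻¹`. -/
theorem mk_mul_mk_of_eq_append' {x y p q t : GPath G} {hxy : x.ran = y.ran} {hpq : p.ran = q.ran}
    {ht : p.ran = t.start} (hy : y = p.append t ht) :
    mk x y hxy * mk p q hpq =
      mk x (q.append t (hpq.symm.trans ht)) (by subst hy; simpa using hxy) := by
  subst hy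
  change gmul _ _ = _
  by_cases h : (p.append t ht).IsPrefixOf p
  · rw [gmul, dif_pos h]
    have hnil : t.edges = [] := by simpa using h.2.length_le
    exact mk_congr (ext rfl (by show x.edges ++ p.edges.drop (p.edges ++ t.edges).length = _; simp))
      (ext rfl (by simp [hnil]))
  · rw [gmul, dif_neg h, dif_pos (isPrefixOf_append p t ht)]
    exact mk_congr rfl
      (ext rfl (by show q.edges ++ (p.edges ++ t.edges).drop p.edges.length = _; simp))

theorem mk_mul_mk_eq_zero {x y p q : GPath G} {hxy : x.ran = y.ran} {hpq : p.ran = q.ran}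
    (h₁ : ¬ y.IsPrefixOf p) (h₂ : ¬ p.IsPrefixOf y) : mk x y hxy * mk p q hpq = 0 := by
  change gmul _ _ = _
  rw [gmul, dif_neg h₁, dif_neg h₂]
  rfl

@[simp] theorem inv_inv (a : GIS G) : a.inv.inv = a := by cases a <;> rfl

theorem inv_mul (a b : GIS G) : (a * b).inv = b.inv * a.inv := by
  cases a with
  | zero => cases b <;> rfl
  | mk x y hxy =>
  cases b with
  | zero => rfl
  | mk p q hpq =>
  by_cases h₁ : y.IsPrefixOf p
  · obtain ⟨t, ht, hp⟩ := h₁.exists_eq_append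
    rw [mk_mul_mk_of_eq_append hp]
    exact (mk_mul_mk_of_eq_append' hp).symm
  by_cases h₂ : p.IsPrefixOf y
  · obtain ⟨t, ht, hy⟩ := h₂.exists_eq_append
    rw [mk_mul_mk_of_eq_append' hy]
    exact (mk_mul_mk_of_eq_append hy).symm
  rw [mk_mul_mk_eq_zero h₁ h₂]
  exact (mk_mul_mk_eq_zero h₂ h₁).symm

def ranIdeal (S : Set G.V) : Set (GIS G) := {a | a = 0 ∨ ∃ x y h, a = mk x y h ∧ x.ran ∈ S}

variable {S : Set G.V}

theorem zero_mem_ranIdeal : (0 : GIS G) ∈ ranIdeal S := Or.inl rfl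

@[simp] theorem mk_mem_ranIdeal {x y : GPath G} {h : x.ran = y.ran} :
    mk x y h ∈ ranIdeal S ↔ x.ran ∈ S := by
  refine ⟨?_, fun hx => Or.inr ⟨x, y, h, rfl, hx⟩⟩
  rintro (h0 | ⟨x', y', h', he, hx⟩)
  · exact absurd h0 mk_ne_zero
  · obtain ⟨rfl, -⟩ := mk.inj he
    exact hx

theorem inv_mem_ranIdeal {a : GIS G} (ha : a ∈ ranIdeal S) : a.inv ∈ ranIdeal S := by
  cases a with
  | zero => exact zero_mem_ranIdeal
  | mk x y h => simpa [inv, ← h] using ha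

theorem mk_mul_mem_ranIdeal (hS : G.IsForwardClosed S) {x y : GPath G} {h : x.ran = y.ran}
    (hx : x.ran ∈ S) (c : GIS G) : mk x y h * c ∈ ranIdeal S := by
  cases c with
  | zero => exact zero_mem_ranIdeal
  | mk p q hpq =>
  by_cases h₁ : y.IsPrefixOf p
  · obtain ⟨t, ht, hp⟩ := h₁.exists_eq_append
    rw [mk_mul_mk_of_eq_append hp, mk_mem_ranIdeal, append_ran]
    exact hS t (ht ▸ h ▸ hx)
  by_cases h₂ : p.IsPrefixOf y
  · obtain ⟨t, ht, hy⟩ := h₂.exists_eq_append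
    rwa [mk_mul_mk_of_eq_append' hy, mk_mem_ranIdeal]
  rw [mk_mul_mk_eq_zero h₁ h₂]
  exact zero_mem_ranIdeal

theorem mul_mem_ranIdeal (hS : G.IsForwardClosed S) {a : GIS G} (ha : a ∈ ranIdeal S)
    (c : GIS G) : a * c ∈ ranIdeal S := by
  rcases ha with rfl | ⟨x, y, h, rfl, hx⟩
  · exact zero_mem_ranIdeal
  · exact mk_mul_mem_ranIdeal hS hx c

open scoped Classical in
/-- Cancels the longest common trailing power of `e`: `(x eⁿ)(y eⁿ)⁻¹ ↦ x y⁻¹`. -/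
noncomputable def dropTrailing (e : G.Ed) : GIS G → GIS G
  | zero => zero
  | mk x y h =>
    mk (x.truncate _ (List.stripCommonSuffix_fst_prefix e x.edges y.edges))
      (y.truncate _ (List.stripCommonSuffix_snd_prefix e x.edges y.edges))
      (by
        obtain ⟨n, hx, hy⟩ := List.stripCommonSuffix_spec e x.edges y.edges
        exact ran_eq_ran_of_edges_eq_append_replicate (x := x) (y := y) rfl rfl hx hy h)

variable {e : G.Ed}

theorem dropTrailing_mk_ne_zero {x y : GPath G} {h : x.ran = y.ran} :
    dropTrailing e (mk x y h) ≠ 0 :=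
  mk_ne_zero

theorem dropTrailing_mk_spec (x y : GPath G) (h : x.ran = y.ran) :
    ∃ (x₀ y₀ : GPath G) (h₀ : x₀.ran = y₀.ran) (n : ℕ),
      dropTrailing e (mk x y h) = mk x₀ y₀ h₀ ∧ x₀.start = x.start ∧ y₀.start = y.start ∧
        x.edges = x₀.edges ++ List.replicate n e ∧ y.edges = y₀.edges ++ List.replicate n e := by
  classical
  obtain ⟨n, hx, hy⟩ := List.stripCommonSuffix_spec e x.edges y.edges
  exact ⟨_, _, _, n, rfl, rfl, rfl, hx, hy⟩

theorem dropTrailing_mk_of_concat {x y x' y' : GPath G} {h : x.ran = y.ran}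
    {h' : x'.ran = y'.ran} (hx : x'.start = x.start) (hx' : x'.edges = x.edges ++ [e])
    (hy : y'.start = y.start) (hy' : y'.edges = y.edges ++ [e]) :
    dropTrailing e (mk x' y' h') = dropTrailing e (mk x y h) :=
  mk_congr (ext hx (by simp [hx', hy', List.stripCommonSuffix_concat]))
    (ext hy (by simp [hx', hy', List.stripCommonSuffix_concat]))

theorem dropTrailing_inv (a : GIS G) : dropTrailing e a.inv = (dropTrailing e a).inv := by
  cases a with
  | zero => rfl
  | mk x y h =>
    classical
    show mk _ _ _ = mk _ _ _
    have hc := List.stripCommonSuffix_comm e x.edges y.edges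
    exact mk_congr (ext rfl (by simp [hc])) (ext rfl (by simp [hc]))

theorem dropTrailing_eq_self (hrng : G.rng e ∉ S) {a : GIS G} (ha : a ∈ ranIdeal S) :
    dropTrailing e a = a := by
  rcases ha with rfl | ⟨x, y, h, rfl, hx⟩
  · rfl
  obtain ⟨x₀, y₀, h₀, _ | n, hd, hxs, hys, hxe, hye⟩ := dropTrailing_mk_spec (e := e) x y h
  · simp only [List.replicate_zero, List.append_nil] at hxe hye
    rw [hd]
    exact mk_congr (ext hxs hxe.symm) (ext hys hye.symm)
  · rw [List.replicate_succ', ← List.append_assoc] at hxe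
    exact absurd (ran_eq_rng_of_edges_eq_concat hxe ▸ hx) hrng

theorem eq_of_dropTrailing_eq (hsrc : G.src e ∉ S) (hrng : G.rng e ∉ S) {a b : GIS G}
    (ha : a ∈ ranIdeal S) (hab : dropTrailing e b = dropTrailing e a) : b = a := by
  rw [dropTrailing_eq_self hrng ha] at hab
  cases b with
  | zero => exact hab
  | mk u w h =>
  obtain ⟨u₀, w₀, h₀, _ | n, hd, hus, hws, hue, hwe⟩ := dropTrailing_mk_spec (e := e) u w h
  · simp only [List.replicate_zero, List.append_nil] at hue hwe
    rw [← hab, hd]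
    exact mk_congr (ext hus.symm hue) (ext hws.symm hwe)
  · rw [hd] at hab
    rcases ha with rfl | ⟨x, y, hxy, rfl, hx⟩
    · exact absurd hab mk_ne_zero
    obtain ⟨rfl, -⟩ := mk.inj hab
    rw [List.replicate_succ] at hue
    exact (hsrc (ran_eq_src_of_edges_eq hus hue ▸ hx)).elim

variable (S e) in
def trailingRel (a b : GIS G) : Prop :=
  (a ∈ ranIdeal S ∧ b ∈ ranIdeal S) ∨ dropTrailing e a = dropTrailing e b

theorem trailingRel_equivalence (hsrc : G.src e ∉ S) (hrng : G.rng e ∉ S) :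
    Equivalence (trailingRel S e) where
  refl _ := Or.inr rfl
  symm := by
    rintro a b (⟨ha, hb⟩ | h)
    exacts [Or.inl ⟨hb, ha⟩, Or.inr h.symm]
  trans := by
    rintro a b c (⟨ha, hb⟩ | hab) (⟨hb', hc⟩ | hbc)
    · exact Or.inl ⟨ha, hc⟩
    · exact Or.inl ⟨ha, eq_of_dropTrailing_eq hsrc hrng hb hbc.symm ▸ hb⟩
    · exact Or.inl ⟨eq_of_dropTrailing_eq hsrc hrng hb' hab ▸ hb', hc⟩
    · exact Or.inr (hab.trans hbc)

theorem trailingRel.inv {a b : GIS G} (h : trailingRel S e a b) :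
    trailingRel S e a.inv b.inv :=
  h.imp (fun hab => ⟨inv_mem_ranIdeal hab.1, inv_mem_ranIdeal hab.2⟩)
    (fun hab => by rw [dropTrailing_inv, dropTrailing_inv, hab])

theorem trailingRel_mul_of_concat (hS : G.IsEdgeBarrier e S) {x y x' y' : GPath G}
    {h : x.ran = y.ran} {h' : x'.ran = y'.ran} (hx : x'.start = x.start)
    (hx' : x'.edges = x.edges ++ [e]) (hy : y'.start = y.start)
    (hy' : y'.edges = y.edges ++ [e]) (c : GIS G) :
    trailingRel S e (mk x' y' h' * c) (mk x y h * c) := by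
  obtain ⟨hxe, rfl⟩ := eq_append_ofEdge hx hx'
  obtain ⟨hye, rfl⟩ := eq_append_ofEdge hy hy'
  cases c with
  | zero => exact Or.inr rfl
  | mk p q hpq =>
  set ye := y.append (ofEdge G e) hye
  by_cases h₁ : ye.IsPrefixOf p
  · obtain ⟨t, ht, hp⟩ := h₁.exists_eq_append
    refine Or.inr (congrArg _ ?_)
    have ht' : (ofEdge G e).ran = t.start := by simpa [ye] using ht
    rw [mk_mul_mk_of_eq_append hp, mk_mul_mk_of_eq_append (hp.trans (append_assoc _ _ _ _ ht'))]
    exact mk_congr (append_assoc _ _ _ _ _) rfl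
  by_cases h₂ : p.IsPrefixOf ye
  · obtain ⟨t, ht, rfl⟩ := (h₂.isPrefixOf_of_append_ofEdge h₁).exists_eq_append
    have hte : t.ran = (ofEdge G e).start := by simpa using hye
    refine Or.inr ?_
    rw [mk_mul_mk_of_eq_append' (append_assoc p t (ofEdge G e) ht hte),
      mk_mul_mk_of_eq_append' rfl]
    exact dropTrailing_mk_of_concat rfl rfl rfl (by simp)
  -- The left product vanishes; the right one is `0` or `(x t) q⁻¹` with `t` a nontrivial path
  -- out of `s(e)` not beginning with `e`, which the barrier sends into `S`.
  refine Or.inl ⟨by rw [mk_mul_mk_eq_zero h₁ h₂]; exact zero_mem_ranIdeal, ?_⟩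
  by_cases h₃ : y.IsPrefixOf p
  · obtain ⟨t, ht, hp⟩ := h₃.exists_eq_append
    rw [mk_mul_mk_of_eq_append hp, mk_mem_ranIdeal, append_ran]
    refine hS.ran_mem t (ht.symm.trans hye) (fun ht₀ => h₂ ?_) (fun het => h₁ ?_)
    · exact ⟨by simp [hp, ye], by simp [hp, ye, ht₀]⟩
    · obtain ⟨t', ht', hte⟩ := het.exists_eq_append
      subst hte
      exact hp.trans (append_assoc _ _ _ _ _).symm ▸ isPrefixOf_append _ _ _
  · have h₄ : ¬ p.IsPrefixOf y := fun h => h₂ (h.trans (isPrefixOf_append _ _ _))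
    rw [mk_mul_mk_eq_zero h₃ h₄]
    exact zero_mem_ranIdeal

theorem trailingRel_mul_of_replicate (hS : G.IsEdgeBarrier e S) (c : GIS G) :
    ∀ (n : ℕ) {x y x' y' : GPath G} {h : x.ran = y.ran} {h' : x'.ran = y'.ran},
      x'.start = x.start → x'.edges = x.edges ++ List.replicate n e →
      y'.start = y.start → y'.edges = y.edges ++ List.replicate n e →
      trailingRel S e (mk x' y' h' * c) (mk x y h * c)
  | 0, x, y, x', y', h, h', hx, hx', hy, hy' => by
    simp only [List.replicate_zero, List.append_nil] at hx' hy'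
    rw [mk_congr (h' := h) (ext hx hx') (ext hy hy')]
    exact Or.inr rfl
  | n + 1, x, y, x', y', h, h', hx, hx', hy, hy' => by
    rw [List.replicate_succ', ← List.append_assoc] at hx' hy'
    let x₁ := x'.truncate _ ⟨_, hx'.symm⟩
    let y₁ := y'.truncate _ ⟨_, hy'.symm⟩
    have h₁ : x₁.ran = y₁.ran :=
      (ran_eq_src_of_edges_eq (p := x') (q := x₁) rfl hx').trans
        (ran_eq_src_of_edges_eq (p := y') (q := y₁) rfl hy').symm
    exact (trailingRel_equivalence hS.src_not_mem hS.rng_not_mem).trans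
      (trailingRel_mul_of_concat hS (x := x₁) (y := y₁) (x' := x') (y' := y') (h := h₁)
        rfl hx' rfl hy' c)
      (trailingRel_mul_of_replicate hS c n (x' := x₁) (y' := y₁) hx rfl hy rfl)

theorem trailingRel_mul_dropTrailing (hS : G.IsEdgeBarrier e S) (a c : GIS G) :
    trailingRel S e (a * c) (dropTrailing e a * c) := by
  cases a with
  | zero => exact Or.inr rfl
  | mk x y h =>
    obtain ⟨x₀, y₀, h₀, n, hd, hxs, hys, hxe, hye⟩ := dropTrailing_mk_spec (e := e) x y h
    rw [hd]
    exact trailingRel_mul_of_replicate hS c n hxs.symm hxe hys.symm hye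

theorem trailingRel.mul_right (hS : G.IsEdgeBarrier e S) {a b : GIS G}
    (hab : trailingRel S e a b) (c : GIS G) : trailingRel S e (a * c) (b * c) := by
  have hequiv := trailingRel_equivalence hS.src_not_mem hS.rng_not_mem
  rcases hab with ⟨ha, hb⟩ | hab
  · exact Or.inl ⟨mul_mem_ranIdeal hS.forwardClosed ha c, mul_mem_ranIdeal hS.forwardClosed hb c⟩
  · refine hequiv.trans (trailingRel_mul_dropTrailing hS a c) ?_
    rw [hab]
    exact hequiv.symm (trailingRel_mul_dropTrailing hS b c)

theorem trailingRel.mul_left (hS : G.IsEdgeBarrier e S) {a b : GIS G}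
    (hab : trailingRel S e a b) (c : GIS G) : trailingRel S e (c * a) (c * b) := by
  simpa [inv_mul] using (hab.inv.mul_right hS c.inv).inv

def trailingCon (hS : G.IsEdgeBarrier e S) : Con (GIS G) where
  r := trailingRel S e
  iseqv := trailingRel_equivalence hS.src_not_mem hS.rng_not_mem
  mul' hab hcd := (trailingRel_equivalence hS.src_not_mem hS.rng_not_mem).trans
    (hab.mul_right hS _) (hcd.mul_left hS _)

theorem not_isReesCon_of_le {ρ R : Con (GIS G)} (hle : ρ ≤ R) {a b : GIS G}
    (hab : ρ a b) (hne : a ≠ b) (ha : ¬ R a 0) : ¬ IsReesCon ρ := by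
  rintro ⟨I, hI, hρ⟩
  have haI : a ∈ I := (((hρ a b).1 hab).resolve_right hne).1
  have h0I : (0 : GIS G) ∈ I := GIS.mul_zero a ▸ (hI a haI 0).1
  exact ha (hle ((hρ a 0).2 (Or.inl ⟨haI, h0I⟩)))

end GIS

theorem DGraph.isEdgeBarrier_not_connected (G : DGraph) (e : G.Ed)
    (h : ∀ p : GPath G, p.start = G.src e → p.ran = G.rng e → p.edges ≠ [] →
      ∃ (t : GPath G) (ht : (GPath.ofEdge G e).ran = t.start),
        p = (GPath.ofEdge G e).append t ht) :
    G.IsEdgeBarrier e {u | ¬ GConnected G u (G.rng e)} where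
  forwardClosed p hp := fun ⟨t, ht, htr⟩ => hp ⟨p.append t ht.symm, rfl, by simpa using htr⟩
  rng_not_mem hr := hr ⟨GPath.ofVertex G _, rfl, rfl⟩
  ran_mem t hts hne hnp := by
    rintro ⟨s, hs, hsr⟩
    obtain ⟨t', _, hpath⟩ := h (t.append s hs.symm) hts (by simpa using hsr) (by simp [hne])
    obtain ⟨f, r, hfr⟩ := List.exists_cons_of_ne_nil hne
    have hf : f = e := by simpa [hfr] using congrArg (·.edges.head?) hpath
    exact hnp ⟨hts.symm, by simp [hfr, hf]⟩

theorem vertexEl_ne_mk_ofEdge (G : DGraph) (e : G.Ed) :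
    vertexEl G (G.src e) ≠ GIS.mk (GPath.ofEdge G e) (GPath.ofEdge G e) rfl := by
  intro h
  simpa using congrArg GPath.edges (GIS.mk.inj h).1

/-- Let `e ∈ E¹` with `v = s(e)`, and suppose every path `p` of positive
length with `s(p) = v` and `r(p) = r(e)` has the form `p = e t` for some path `t`. Then the
least congruence on `G(E)` containing `(v, e e⁻¹)` is not a Rees congruence. -/
theorem stmt13 (G : DGraph) (e : G.Ed)
    (h : ∀ p : GPath G, p.start = G.src e → p.ran = G.rng e → p.edges ≠ [] →
      ∃ (t : GPath G) (ht : (GPath.ofEdge G e).ran = t.start),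
        p = (GPath.ofEdge G e).append t ht) :
    ¬ IsReesCon (conGen (fun a b : GIS G =>
      a = vertexEl G (G.src e) ∧
      b = GIS.mk (GPath.ofEdge G e) (GPath.ofEdge G e) rfl)) := by
  have hS := G.isEdgeBarrier_not_connected e h
  refine GIS.not_isReesCon_of_le (R := GIS.trailingCon hS) (Con.conGen_le.2 ?_)
    (ConGen.Rel.of _ _ ⟨rfl, rfl⟩) (vertexEl_ne_mk_ofEdge G e) ?_
  · rintro a b ⟨rfl, rfl⟩
    exact Or.inr (GIS.dropTrailing_mk_of_concat (x := GPath.ofVertex G (G.src e))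
      (y := GPath.ofVertex G (G.src e)) (x' := GPath.ofEdge G e) (y' := GPath.ofEdge G e)
      rfl rfl rfl rfl).symm
  · rintro (⟨hv, -⟩ | hv)
    · exact hS.src_not_mem (GIS.mk_mem_ranIdeal.1 hv)
    · exact GIS.dropTrailing_mk_ne_zero hv
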